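/- Let X_{12}, X_{13}, X_{23} be independent random variables with X_{12} ~ Bernoulli(1/2) and X_{13}, X_{23} each uniform on {0, 2, 5}. Define S_1 = X_{12} + X_{13}, S_2 = (1 − X_{12}) + X_{23}, S_3 = (5 − X_{13}) + (5 − X_{23}). Then the random vector (S_1, S_2, S_3) is not NRD, not NLTD, and not NRTD. In particular, there exists a bounded coordinatewise increasing symmetric function f: ℝ^2 → ℝ with E[f(S_1,S_2) | S_3 = 5] < E[f(S_1,S_2) | S_3 = 6], E[f(S_1,S_2) | S_3 ≤ 5] < E[f(S_1,S_2) | S_3 ≤ 6], and E[f(S_1,S_2) | S_3 ≥ 5] < E[f(S_1,S_2) | S_3 ≥ 6]. -/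

import Mathlib

open scoped Classical
open Finset

noncomputable section

/-- Probability of the event `A` on a finite sample space with weights `w`. -/
def Pr {Ω : Type*} [Fintype Ω] (w : Ω → ℝ) (A : Ω → Prop) : ℝ :=
  ∑ ω : Ω, if A ω then w ω else 0

/-- Expectation of `f` on a finite sample space with weights `w`. -/
def Expec {Ω : Type*} [Fintype Ω] (w : Ω → ℝ) (f : Ω → ℝ) : ℝ :=
  ∑ ω : Ω, w ω * f ω

/-- Conditional expectation of `f` given the event `A` under weights `w`. -/
def CExp {Ω : Type*} [Fintype Ω] (w : Ω → ℝ) (A : Ω → Prop) (f : Ω → ℝ) : ℝ :=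
  (∑ ω : Ω, if A ω then w ω * f ω else 0) / Pr w A

/-- `[X_I | A] ≤_st [X_I | B]` : the conditional distribution of the subvector `X_I`
given the event `A` is dominated, in the usual stochastic order, by the conditional
distribution of `X_I` given `B`; i.e. conditional expectations of every bounded
coordinatewise increasing function compare. -/
def CondSubvecStochLE {Ω : Type*} [Fintype Ω] {n : ℕ} (w : Ω → ℝ)
    (X : Ω → Fin n → ℝ) (I : Finset (Fin n)) (A B : Ω → Prop) : Prop :=
  ∀ φ : ({i : Fin n // i ∈ I} → ℝ) → ℝ, Monotone φ → (∃ C, ∀ v, |φ v| ≤ C) →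
    CExp w A (fun ω => φ fun i => X ω i.1) ≤ CExp w B (fun ω => φ fun i => X ω i.1)

/-- Negative regression dependence: `[X_I | X_J = x_J] ≥_st [X_I | X_J = x_J*]`
whenever `x_J ≤ x_J*` componentwise and both conditioning events have
positive probability. -/
def IsNRD {Ω : Type*} [Fintype Ω] {n : ℕ} (w : Ω → ℝ) (X : Ω → Fin n → ℝ) : Prop :=
  ∀ I J : Finset (Fin n), Disjoint I J → ∀ x y : Fin n → ℝ, (∀ j ∈ J, x j ≤ y j) →
    0 < Pr w (fun ω => ∀ j ∈ J, X ω j = x j) →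
    0 < Pr w (fun ω => ∀ j ∈ J, X ω j = y j) →
    CondSubvecStochLE w X I (fun ω => ∀ j ∈ J, X ω j = y j)
      (fun ω => ∀ j ∈ J, X ω j = x j)

/-- Negative left-tail dependence: `[X_I | X_J ≤ x_J] ≥_st [X_I | X_J ≤ x_J*]`
whenever `x_J ≤ x_J*` componentwise and both conditioning events have
positive probability. -/
def IsNLTD {Ω : Type*} [Fintype Ω] {n : ℕ} (w : Ω → ℝ) (X : Ω → Fin n → ℝ) : Prop :=
  ∀ I J : Finset (Fin n), Disjoint I J → ∀ x y : Fin n → ℝ, (∀ j ∈ J, x j ≤ y j) →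
    0 < Pr w (fun ω => ∀ j ∈ J, X ω j ≤ x j) →
    0 < Pr w (fun ω => ∀ j ∈ J, X ω j ≤ y j) →
    CondSubvecStochLE w X I (fun ω => ∀ j ∈ J, X ω j ≤ y j)
      (fun ω => ∀ j ∈ J, X ω j ≤ x j)

/-- Negative right-tail dependence: `[X_I | X_J > x_J] ≥_st [X_I | X_J > x_J*]`
whenever `x_J ≤ x_J*` componentwise and both conditioning events have
positive probability. -/
def IsNRTD {Ω : Type*} [Fintype Ω] {n : ℕ} (w : Ω → ℝ) (X : Ω → Fin n → ℝ) : Prop :=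
  ∀ I J : Finset (Fin n), Disjoint I J → ∀ x y : Fin n → ℝ, (∀ j ∈ J, x j ≤ y j) →
    0 < Pr w (fun ω => ∀ j ∈ J, x j < X ω j) →
    0 < Pr w (fun ω => ∀ j ∈ J, y j < X ω j) →
    CondSubvecStochLE w X I (fun ω => ∀ j ∈ J, y j < X ω j)
      (fun ω => ∀ j ∈ J, x j < X ω j)

/-- Negative association on a finite weighted sample space:
`Cov(ψ₁(X_{A₁}), ψ₂(X_{A₂})) ≤ 0` for disjoint `A₁, A₂` and bounded
coordinatewise increasing `ψ₁, ψ₂`. -/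
def IsNAfin {Ω : Type*} [Fintype Ω] {n : ℕ} (w : Ω → ℝ) (X : Ω → Fin n → ℝ) : Prop :=
  ∀ A₁ A₂ : Finset (Fin n), Disjoint A₁ A₂ →
    ∀ ψ₁ : ({i : Fin n // i ∈ A₁} → ℝ) → ℝ, ∀ ψ₂ : ({i : Fin n // i ∈ A₂} → ℝ) → ℝ,
      Monotone ψ₁ → Monotone ψ₂ → (∃ C, ∀ v, |ψ₁ v| ≤ C) → (∃ C, ∀ v, |ψ₂ v| ≤ C) →
      Expec w (fun ω => (ψ₁ fun i => X ω i.1) * (ψ₂ fun i => X ω i.1))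
        ≤ Expec w (fun ω => ψ₁ fun i => X ω i.1) * Expec w (fun ω => ψ₂ fun i => X ω i.1)

/-- The uniform distribution on the permutations of `Fin n`. -/
def unifPerm (n : ℕ) : Equiv.Perm (Fin n) → ℝ := fun _ => (Nat.factorial n : ℝ)⁻¹

/-- The random vector with the permutation distribution on `a`:
`X = (a_{σ(1)}, …, a_{σ(n)})` for a uniformly random permutation `σ`. -/
def permVec {n : ℕ} (a : Fin n → ℝ) (σ : Equiv.Perm (Fin n)) : Fin n → ℝ :=
  fun i => a (σ i)

/-- The sample space of the 3-player round-robin example: the first coordinate drives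
`X₁₂ ~ Bernoulli(1/2)` and the other two drive `X₁₃, X₂₃`, each uniform on
`{0, 2, 5}`; all three are independent, so each of the 18 outcomes has
probability `1/18`. -/
abbrev RR3Omega := Bool × Fin 3 × Fin 3

def rr3Unif : RR3Omega → ℝ := fun _ => (18 : ℝ)⁻¹

/-- The three possible values `{0, 2, 5}` of `X₁₃` and `X₂₃`. -/
def rr3Val : Fin 3 → ℝ := ![0, 2, 5]

/-- The total scores `S₁ = X₁₂ + X₁₃`, `S₂ = (1 - X₁₂) + X₂₃`,
`S₃ = (5 - X₁₃) + (5 - X₂₃)`. -/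
def rr3Score : RR3Omega → Fin 3 → ℝ := fun ω =>
  ![(if ω.1 then 1 else 0) + rr3Val ω.2.1,
    (if ω.1 then 0 else 1) + rr3Val ω.2.2,
    (5 - rr3Val ω.2.1) + (5 - rr3Val ω.2.2)]

/-!
The witness is `f(s₁, s₂) = 1{s₁ ≥ 2, s₂ ≥ 2}`. Given `S₃ = 5`, one of players 1, 2 scored `0`
against player 3 and so has total at most `1`, whence `f = 0`; given `S₃ = 6` both scored `2`
against player 3, whence `f = 1`. Over the tails the conditional means are `3/5 < 2/3` given
`S₃ ≤ 5, 6` and `1/6 < 1/4` given `S₃ ≥ 5, 6` (equivalently `S₃ > 4, 5`, as `S₃` is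
integer valued). With `I = {1, 2}` and `J = {3}` each of these
increases contradicts the corresponding negative dependence property.
-/

section Dependence

variable {Ω : Type*} [Fintype Ω] {n : ℕ} {w : Ω → ℝ} {X : Ω → Fin n → ℝ}

lemma Pr_pos_of_exists (hw : ∀ ω, 0 < w ω) {A : Ω → Prop} (hA : ∃ ω, A ω) : 0 < Pr w A := by
  obtain ⟨ω₀, hω₀⟩ := hA
  refine Finset.sum_pos' (fun ω _ => ?_) ⟨ω₀, mem_univ _, by simp [hω₀, hw ω₀]⟩
  split_ifs
  exacts [(hw ω).le, le_rfl]

lemma not_condSubvecStochLE_of_lt {I : Finset (Fin n)} {A B : Ω → Prop}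
    {φ : ({i : Fin n // i ∈ I} → ℝ) → ℝ} (hφ : Monotone φ) (hφb : ∃ C, ∀ v, |φ v| ≤ C)
    (hlt : CExp w B (fun ω => φ fun i => X ω i.1) < CExp w A (fun ω => φ fun i => X ω i.1)) :
    ¬ CondSubvecStochLE w X I A B :=
  fun h => (h φ hφ hφb).not_gt hlt

variable {I : Finset (Fin n)} {j : Fin n} {a b : ℝ} {φ : ({i : Fin n // i ∈ I} → ℝ) → ℝ}

lemma not_isNRD_of_condExp_lt (hj : j ∉ I) (hab : a ≤ b)
    (ha : 0 < Pr w (fun ω => X ω j = a)) (hb : 0 < Pr w (fun ω => X ω j = b))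
    (hφ : Monotone φ) (hφb : ∃ C, ∀ v, |φ v| ≤ C)
    (hlt : CExp w (fun ω => X ω j = a) (fun ω => φ fun i => X ω i.1)
      < CExp w (fun ω => X ω j = b) (fun ω => φ fun i => X ω i.1)) :
    ¬ IsNRD w X := fun h => by
  have := h I {j} (disjoint_singleton_right.2 hj) (fun _ => a) (fun _ => b) (by simpa)
    (by simpa) (by simpa)
  simp only [mem_singleton, forall_eq] at this
  exact not_condSubvecStochLE_of_lt hφ hφb hlt this

lemma not_isNLTD_of_condExp_lt (hj : j ∉ I) (hab : a ≤ b)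
    (ha : 0 < Pr w (fun ω => X ω j ≤ a)) (hb : 0 < Pr w (fun ω => X ω j ≤ b))
    (hφ : Monotone φ) (hφb : ∃ C, ∀ v, |φ v| ≤ C)
    (hlt : CExp w (fun ω => X ω j ≤ a) (fun ω => φ fun i => X ω i.1)
      < CExp w (fun ω => X ω j ≤ b) (fun ω => φ fun i => X ω i.1)) :
    ¬ IsNLTD w X := fun h => by
  have := h I {j} (disjoint_singleton_right.2 hj) (fun _ => a) (fun _ => b) (by simpa)
    (by simpa) (by simpa)
  simp only [mem_singleton, forall_eq] at this
  exact not_condSubvecStochLE_of_lt hφ hφb hlt this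

lemma not_isNRTD_of_condExp_lt (hj : j ∉ I) (hab : a ≤ b)
    (ha : 0 < Pr w (fun ω => a < X ω j)) (hb : 0 < Pr w (fun ω => b < X ω j))
    (hφ : Monotone φ) (hφb : ∃ C, ∀ v, |φ v| ≤ C)
    (hlt : CExp w (fun ω => a < X ω j) (fun ω => φ fun i => X ω i.1)
      < CExp w (fun ω => b < X ω j) (fun ω => φ fun i => X ω i.1)) :
    ¬ IsNRTD w X := fun h => by
  have := h I {j} (disjoint_singleton_right.2 hj) (fun _ => a) (fun _ => b) (by simpa)
    (by simpa) (by simpa)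
  simp only [mem_singleton, forall_eq] at this
  exact not_condSubvecStochLE_of_lt hφ hφb hlt this

end Dependence

def pairEval {n : ℕ} {I : Finset (Fin n)} {i₁ i₂ : Fin n} (h₁ : i₁ ∈ I) (h₂ : i₂ ∈ I)
    (v : {i : Fin n // i ∈ I} → ℝ) : ℝ × ℝ :=
  (v ⟨i₁, h₁⟩, v ⟨i₂, h₂⟩)

lemma monotone_pairEval {n : ℕ} {I : Finset (Fin n)} {i₁ i₂ : Fin n} (h₁ : i₁ ∈ I)
    (h₂ : i₂ ∈ I) : Monotone (pairEval h₁ h₂) :=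
  fun _ _ h => ⟨h _, h _⟩

section Indicator

variable {α : Type*} {s : Set α}

lemma IsUpperSet.monotone_indicator_one [Preorder α] (hs : IsUpperSet s) :
    Monotone (s.indicator (1 : α → ℝ)) := by
  intro x y hxy
  by_cases hx : x ∈ s
  · simp [hx, hs hxy hx]
  · simp only [Set.indicator_of_notMem hx]
    exact Set.indicator_nonneg (fun _ _ => zero_le_one) y

lemma abs_indicator_one_le (x : α) : |s.indicator (1 : α → ℝ) x| ≤ 1 := by
  by_cases hx : x ∈ s <;> simp [hx]

lemma indicator_Ici_diag_swap {β : Type*} [Preorder β] (c : β) (x y : β) :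
    (Set.Ici (c, c)).indicator (1 : β × β → ℝ) (x, y)
      = (Set.Ici (c, c)).indicator (1 : β × β → ℝ) (y, x) := by
  simp only [Set.indicator_apply, Set.mem_Ici, Prod.mk_le_mk, Pi.one_apply, and_comm]

end Indicator

def rr3Witness : ℝ × ℝ → ℝ := (Set.Ici (2, 2)).indicator 1

lemma rr3Witness_monotone : Monotone rr3Witness :=
  isUpperSet_Ici _ |>.monotone_indicator_one

@[simp] lemma rr3Val_zero : rr3Val 0 = 0 := rfl

@[simp] lemma rr3Val_one : rr3Val 1 = 2 := rfl

@[simp] lemma rr3Val_two : rr3Val 2 = 5 := rfl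

lemma rr3Score_two (ω : RR3Omega) : rr3Score ω 2 = 10 - rr3Val ω.2.1 - rr3Val ω.2.2 := by
  simp only [rr3Score, Matrix.cons_val_two, Matrix.tail_cons, Matrix.head_cons]
  ring

lemma rr3Unif_pos (ω : RR3Omega) : 0 < rr3Unif ω := by norm_num [rr3Unif]

section Computations

local notation "F" => fun ω : RR3Omega => rr3Witness (rr3Score ω 0, rr3Score ω 1)

lemma rr3_condExp_eq_five : CExp rr3Unif (fun ω => rr3Score ω 2 = 5) F = 0 := by
  norm_num [CExp, Pr, rr3Witness, Set.indicator_apply, rr3Score, rr3Val, rr3Unif,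
    Fintype.sum_prod_type, Fin.sum_univ_three, Matrix.cons_val_two, Matrix.tail_cons]

lemma rr3_condExp_eq_six : CExp rr3Unif (fun ω => rr3Score ω 2 = 6) F = 1 := by
  norm_num [CExp, Pr, rr3Witness, Set.indicator_apply, rr3Score, rr3Val, rr3Unif,
    Fintype.sum_prod_type, Fin.sum_univ_three, Matrix.cons_val_two, Matrix.tail_cons]

lemma rr3_condExp_le_five : CExp rr3Unif (fun ω => rr3Score ω 2 ≤ 5) F = 3 / 5 := by
  norm_num [CExp, Pr, rr3Witness, Set.indicator_apply, rr3Score, rr3Val, rr3Unif,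
    Fintype.sum_prod_type, Fin.sum_univ_three, Matrix.cons_val_two, Matrix.tail_cons]

lemma rr3_condExp_le_six : CExp rr3Unif (fun ω => rr3Score ω 2 ≤ 6) F = 2 / 3 := by
  norm_num [CExp, Pr, rr3Witness, Set.indicator_apply, rr3Score, rr3Val, rr3Unif,
    Fintype.sum_prod_type, Fin.sum_univ_three, Matrix.cons_val_two, Matrix.tail_cons]

lemma rr3_condExp_five_le : CExp rr3Unif (fun ω => 5 ≤ rr3Score ω 2) F = 1 / 6 := by
  norm_num [CExp, Pr, rr3Witness, Set.indicator_apply, rr3Score, rr3Val, rr3Unif,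
    Fintype.sum_prod_type, Fin.sum_univ_three, Matrix.cons_val_two, Matrix.tail_cons]

lemma rr3_condExp_six_le : CExp rr3Unif (fun ω => 6 ≤ rr3Score ω 2) F = 1 / 4 := by
  norm_num [CExp, Pr, rr3Witness, Set.indicator_apply, rr3Score, rr3Val, rr3Unif,
    Fintype.sum_prod_type, Fin.sum_univ_three, Matrix.cons_val_two, Matrix.tail_cons]

lemma rr3_condExp_gt_four : CExp rr3Unif (fun ω => 4 < rr3Score ω 2) F = 1 / 6 := by
  norm_num [CExp, Pr, rr3Witness, Set.indicator_apply, rr3Score, rr3Val, rr3Unif,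
    Fintype.sum_prod_type, Fin.sum_univ_three, Matrix.cons_val_two, Matrix.tail_cons]

lemma rr3_condExp_gt_five : CExp rr3Unif (fun ω => 5 < rr3Score ω 2) F = 1 / 4 := by
  norm_num [CExp, Pr, rr3Witness, Set.indicator_apply, rr3Score, rr3Val, rr3Unif,
    Fintype.sum_prod_type, Fin.sum_univ_three, Matrix.cons_val_two, Matrix.tail_cons]

end Computations

theorem roundRobin3_not_NRD_NLTD_NRTD :
    ¬ IsNRD rr3Unif rr3Score ∧ ¬ IsNLTD rr3Unif rr3Score ∧ ¬ IsNRTD rr3Unif rr3Score ∧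
    ∃ f : ℝ × ℝ → ℝ, (∃ C, ∀ p, |f p| ≤ C) ∧ Monotone f ∧ (∀ x y, f (x, y) = f (y, x)) ∧
      CExp rr3Unif (fun ω => rr3Score ω 2 = 5) (fun ω => f (rr3Score ω 0, rr3Score ω 1))
        < CExp rr3Unif (fun ω => rr3Score ω 2 = 6)
            (fun ω => f (rr3Score ω 0, rr3Score ω 1)) ∧
      CExp rr3Unif (fun ω => rr3Score ω 2 ≤ 5) (fun ω => f (rr3Score ω 0, rr3Score ω 1))
        < CExp rr3Unif (fun ω => rr3Score ω 2 ≤ 6)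
            (fun ω => f (rr3Score ω 0, rr3Score ω 1)) ∧
      CExp rr3Unif (fun ω => 5 ≤ rr3Score ω 2) (fun ω => f (rr3Score ω 0, rr3Score ω 1))
        < CExp rr3Unif (fun ω => 6 ≤ rr3Score ω 2)
            (fun ω => f (rr3Score ω 0, rr3Score ω 1)) := by
  have h₀ : (0 : Fin 3) ∈ ({0, 1} : Finset (Fin 3)) := by decide
  have h₁ : (1 : Fin 3) ∈ ({0, 1} : Finset (Fin 3)) := by decide
  have hφ := rr3Witness_monotone.comp (monotone_pairEval h₀ h₁)
  have hφb : ∃ C, ∀ v, |(rr3Witness ∘ pairEval h₀ h₁) v| ≤ C :=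
    ⟨1, fun _ => abs_indicator_one_le _⟩
  have hj : (2 : Fin 3) ∉ ({0, 1} : Finset (Fin 3)) := by decide
  have hpos {A : RR3Omega → Prop} : (∃ ω, A ω) → 0 < Pr rr3Unif A :=
    Pr_pos_of_exists rr3Unif_pos
  refine ⟨?_, ?_, ?_, rr3Witness, ⟨1, abs_indicator_one_le⟩, rr3Witness_monotone,
    indicator_Ici_diag_swap 2, ?_, ?_, ?_⟩
  · refine not_isNRD_of_condExp_lt hj (by norm_num : (5 : ℝ) ≤ 6)
      (hpos ⟨(true, 0, 2), by norm_num [rr3Score_two]⟩)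
      (hpos ⟨(true, 1, 1), by norm_num [rr3Score_two]⟩) hφ hφb ?_
    exact (rr3_condExp_eq_five.trans_lt (by norm_num)).trans_eq rr3_condExp_eq_six.symm
  · refine not_isNLTD_of_condExp_lt hj (by norm_num : (5 : ℝ) ≤ 6)
      (hpos ⟨(true, 0, 2), by norm_num [rr3Score_two]⟩)
      (hpos ⟨(true, 0, 2), by norm_num [rr3Score_two]⟩) hφ hφb ?_
    exact (rr3_condExp_le_five.trans_lt (by norm_num)).trans_eq rr3_condExp_le_six.symm
  · refine not_isNRTD_of_condExp_lt hj (by norm_num : (4 : ℝ) ≤ 5)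
      (hpos ⟨(true, 0, 0), by norm_num [rr3Score_two]⟩)
      (hpos ⟨(true, 0, 0), by norm_num [rr3Score_two]⟩) hφ hφb ?_
    exact (rr3_condExp_gt_four.trans_lt (by norm_num)).trans_eq rr3_condExp_gt_five.symm
  · rw [rr3_condExp_eq_five, rr3_condExp_eq_six]; norm_num
  · rw [rr3_condExp_le_five, rr3_condExp_le_six]; norm_num
  · rw [rr3_condExp_five_le, rr3_condExp_six_le]; norm_num
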